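/- Let G be a discrete group, N a normal subgroup, B a *-algebra, and α: G → Aut(B) an action of G on B by *-automorphisms. Form C = B⋊G⋊G⋊N, the crossed product of B by α, then by the dual grading (degree of (b,r) is r) yielding B⋊G⋊G, then the restriction to N of the double-dual action (the dual action of the second crossed product, restricted to N). Form also D = B⋊N⋊G⋊G, starting from the restricted action α|_N, then the decomposition action α^dec_r(b, n) = (α_r(b), r n r⁻¹) of G on B⋊N, then the dual grading and its crossed product by G. Then the map on generators (b, r, s, n) ↦ (b, r s n s⁻¹ r⁻¹, r s n⁻¹ s⁻¹, s n) extends to a *-algebra isomorphism C ≅ D. -/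

import Mathlib

/-!
Statement 4 (Proposition 4.2 of Kaliszewski–Quigg): for a discrete group `G`,
`N ⊴ G`, and an action `α` of `G` on a *-algebra `B` by *-automorphisms, the map
on generators `(b, r, s, n) ↦ (b, r s n s⁻¹ r⁻¹, r s n⁻¹ s⁻¹, s n)` extends to a
*-algebra isomorphism `B ⋊ G ⋊ G ⋊ N ≅ B ⋊ N ⋊ G ⋊ G`.

`C = B ⋊ G ⋊ G ⋊ N` is modelled on `(G × G × ↥N) →₀ B`, generator `(b, r, s, n)`,
with iterated crossed-product operations
  mul: `(a,r,s,n)(b,r',s',n') = (a α_r(b), rr', s' n⁻¹, n n')` if `s = r' s' n⁻¹`;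
  star: `(a,r,s,n)* = (α_{r⁻¹}(a*), r⁻¹, r s n, n⁻¹)`.
`D = B ⋊ N ⋊ G ⋊ G` is modelled on `(↥N × G × G) →₀ B`, generator `(b, n, r, s)`,
with
  mul: `(a,n,r,s)(b,m,r',s') = (a α_n(α_r(b)), n·(r m r⁻¹), r r', s')` if `s = r' s'`;
  star: `(a,n,r,s)* = (α_{r⁻¹}(α_{n⁻¹}(a*)), r⁻¹ n⁻¹ r, r⁻¹, r s)`.
-/

attribute [local instance] Classical.propDecidable

noncomputable section

variable {G : Type*} [Group G] {B : Type*} [Ring B] [Algebra ℂ B] [StarRing B]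
  [StarModule ℂ B] {N : Subgroup G} [hN : N.Normal]

variable (α : G →* (B ≃ₐ[ℂ] B))

/-- Multiplication on `C = B ⋊ G ⋊ G ⋊ N` (generators `(b, r, s, n)`). -/
def cMul (f g : (G × G × N) →₀ B) : (G × G × N) →₀ B :=
  f.sum fun p a => g.sum fun q b =>
    if p.2.1 = q.1 * q.2.1 * ((p.2.2 : G))⁻¹ then
      Finsupp.single (p.1 * q.1, q.2.1 * ((p.2.2 : G))⁻¹, p.2.2 * q.2.2)
        (a * α p.1 b)
    else 0

/-- Involution on `C = B ⋊ G ⋊ G ⋊ N`. -/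
def cStar (f : (G × G × N) →₀ B) : (G × G × N) →₀ B :=
  f.sum fun p a =>
    Finsupp.single (p.1⁻¹, p.1 * p.2.1 * (p.2.2 : G), p.2.2⁻¹)
      (α p.1⁻¹ (star a))

/-- Multiplication on `D = B ⋊ N ⋊ G ⋊ G` (generators `(b, n, r, s)`). -/
def dMul (f g : (N × G × G) →₀ B) : (N × G × G) →₀ B :=
  f.sum fun p a => g.sum fun q b =>
    if p.2.2 = q.2.1 * q.2.2 then
      Finsupp.single
        (p.1 * ⟨p.2.1 * (q.1 : G) * p.2.1⁻¹, hN.conj_mem _ q.1.2 p.2.1⟩,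
          p.2.1 * q.2.1, q.2.2)
        (a * α (p.1 : G) (α p.2.1 b))
    else 0

/-- Involution on `D = B ⋊ N ⋊ G ⋊ G`. -/
def dStar (f : (N × G × G) →₀ B) : (N × G × G) →₀ B :=
  f.sum fun p a =>
    Finsupp.single
      (⟨p.2.1⁻¹ * ((p.1 : G))⁻¹ * (p.2.1⁻¹)⁻¹, hN.conj_mem _ (N.inv_mem p.1.2) p.2.1⁻¹⟩,
        p.2.1⁻¹, p.2.1 * p.2.2)
      (α p.2.1⁻¹ (α ((p.1 : G))⁻¹ (star a)))

/-- The map `(b, r, s, n) ↦ (b, r s n s⁻¹ r⁻¹, r s n⁻¹ s⁻¹, s n)` (linearly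
extended). -/
def moveN (f : (G × G × N) →₀ B) : (N × G × G) →₀ B :=
  f.sum fun p a =>
    Finsupp.single
      (⟨(p.1 * p.2.1) * (p.2.2 : G) * (p.1 * p.2.1)⁻¹, hN.conj_mem _ p.2.2.2 _⟩,
        p.1 * p.2.1 * ((p.2.2 : G))⁻¹ * p.2.1⁻¹, p.2.1 * (p.2.2 : G)) a

end

/-!
`moveN` is `Finsupp.mapDomain` along the bijection `(r, s, n) ↦ (m, u, s n)` of index sets,
where `m = r s n s⁻¹ r⁻¹` and `u = r s n⁻¹ s⁻¹`, so linearity and bijectivity are formal.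
Multiplicativity and *-preservation reduce, generator by generator, to identities in `G`:
the grading condition `s = r' s' n⁻¹` of `C` becomes the condition `s n = r' s'` of `D`, and
the coefficients agree because `m u = r`, whence `α_m ∘ α_u = α_r`.
-/

section MoveN

variable {G : Type*} [Group G] {N : Subgroup G} [hN : N.Normal]

def moveNIndex : (G × G × N) ≃ (N × G × G) where
  toFun p :=
    (⟨(p.1 * p.2.1) * (p.2.2 : G) * (p.1 * p.2.1)⁻¹, hN.conj_mem _ p.2.2.2 _⟩,
      p.1 * p.2.1 * ((p.2.2 : G))⁻¹ * p.2.1⁻¹, p.2.1 * (p.2.2 : G))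
  invFun q :=
    ((q.1 : G) * q.2.1, q.2.1⁻¹ * ((q.1 : G))⁻¹ * q.2.1 * q.2.2,
      ⟨(q.2.1 * q.2.2)⁻¹ * (q.1 : G) * (q.2.1 * q.2.2), hN.conj_mem' _ q.1.2 _⟩)
  left_inv := by
    rintro ⟨r, s, n⟩
    ext <;> simp only [] <;> group
  right_inv := by
    rintro ⟨m, u, v⟩
    ext <;> simp only [] <;> group

section IndexIdentities

variable (p q : G × G × N)

lemma moveNIndex_snd_snd : (moveNIndex p).2.2 = p.2.1 * p.2.2 := rfl

lemma moveNIndex_snd_mul : (moveNIndex p).2.1 * (moveNIndex p).2.2 = p.1 * p.2.1 := by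
  simp only [moveNIndex, Equiv.coe_fn_mk]; group

lemma moveNIndex_fst_mul : ((moveNIndex p).1 : G) * (moveNIndex p).2.1 = p.1 := by
  simp only [moveNIndex, Equiv.coe_fn_mk]; group

lemma moveNIndex_gradings_compatible_iff :
    (moveNIndex p).2.2 = (moveNIndex q).2.1 * (moveNIndex q).2.2 ↔
      p.2.1 = q.1 * q.2.1 * ((p.2.2 : G))⁻¹ := by
  rw [moveNIndex_snd_snd, moveNIndex_snd_mul, eq_mul_inv_iff_mul_eq]

lemma moveNIndex_cMul_index (h : p.2.1 = q.1 * q.2.1 * ((p.2.2 : G))⁻¹) :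
    moveNIndex (p.1 * q.1, q.2.1 * ((p.2.2 : G))⁻¹, p.2.2 * q.2.2) =
      ((moveNIndex p).1 * ⟨(moveNIndex p).2.1 * ((moveNIndex q).1 : G) * (moveNIndex p).2.1⁻¹,
          hN.conj_mem _ (moveNIndex q).1.2 _⟩,
        (moveNIndex p).2.1 * (moveNIndex q).2.1, (moveNIndex q).2.2) := by
  obtain ⟨r, s, n⟩ := p
  obtain ⟨r', s', n'⟩ := q
  dsimp only at h
  subst h
  ext <;> simp only [moveNIndex, Equiv.coe_fn_mk, Subgroup.coe_mul] <;> group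

lemma moveNIndex_cStar_index :
    moveNIndex (p.1⁻¹, p.1 * p.2.1 * (p.2.2 : G), p.2.2⁻¹) =
      (⟨(moveNIndex p).2.1⁻¹ * ((moveNIndex p).1 : G)⁻¹ * ((moveNIndex p).2.1⁻¹)⁻¹,
          hN.conj_mem _ (N.inv_mem (moveNIndex p).1.2) _⟩,
        (moveNIndex p).2.1⁻¹, (moveNIndex p).2.1 * (moveNIndex p).2.2) := by
  ext <;> simp only [moveNIndex, Equiv.coe_fn_mk, Subgroup.coe_inv] <;> group

end IndexIdentities

variable {B : Type*} [Ring B]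

lemma moveN_eq_mapDomain (f : (G × G × N) →₀ B) :
    moveN f = Finsupp.mapDomain (moveNIndex (N := N)) f := rfl

lemma moveN_single (p : G × G × N) (b : B) :
    moveN (Finsupp.single p b) = Finsupp.single (moveNIndex p) b :=
  Finsupp.mapDomain_single

lemma moveN_bijective : Function.Bijective (moveN (G := G) (B := B) (N := N)) := by
  convert (Finsupp.equivCongrLeft (M := B) (moveNIndex (N := N))).bijective
  ext1 f
  rw [Finsupp.equivCongrLeft_apply, Finsupp.equivMapDomain_eq_mapDomain, moveN_eq_mapDomain]

lemma moveN_add (f g : (G × G × N) →₀ B) : moveN (f + g) = moveN f + moveN g :=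
  Finsupp.mapDomain_add

variable [Algebra ℂ B]

lemma moveN_smul (c : ℂ) (f : (G × G × N) →₀ B) : moveN (c • f) = c • moveN f :=
  Finsupp.mapDomain_smul c f

variable (α : G →* (B ≃ₐ[ℂ] B))

lemma moveN_cMul (f g : (G × G × N) →₀ B) :
    moveN (cMul α f g) = dMul α (moveN f) (moveN g) := by
  simp only [moveN_eq_mapDomain, cMul, dMul, Finsupp.mapDomain_sum]
  rw [Finsupp.sum_mapDomain_index_inj moveNIndex.injective]
  refine Finsupp.sum_congr fun p _ => ?_
  rw [Finsupp.sum_mapDomain_index_inj moveNIndex.injective]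
  refine Finsupp.sum_congr fun q _ => ?_
  by_cases h : p.2.1 = q.1 * q.2.1 * ((p.2.2 : G))⁻¹
  · rw [if_pos h, if_pos ((moveNIndex_gradings_compatible_iff p q).mpr h),
      Finsupp.mapDomain_single, moveNIndex_cMul_index p q h, ← AlgEquiv.mul_apply, ← map_mul,
      moveNIndex_fst_mul]
  · rw [if_neg h, if_neg (mt (moveNIndex_gradings_compatible_iff p q).mp h),
      Finsupp.mapDomain_zero]

lemma moveN_cStar [StarRing B] (f : (G × G × N) →₀ B) :
    moveN (cStar α f) = dStar α (moveN f) := by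
  simp only [moveN_eq_mapDomain, cStar, dStar, Finsupp.mapDomain_sum]
  rw [Finsupp.sum_mapDomain_index_inj moveNIndex.injective]
  refine Finsupp.sum_congr fun p _ => ?_
  rw [Finsupp.mapDomain_single, moveNIndex_cStar_index]
  congr 1
  rw [← AlgEquiv.mul_apply, ← map_mul, ← mul_inv_rev, moveNIndex_fst_mul]

end MoveN

variable {G : Type*} [Group G] {B : Type*} [Ring B] [Algebra ℂ B] [StarRing B]
  [StarModule ℂ B] {N : Subgroup G} [hN : N.Normal]

variable (α : G →* (B ≃ₐ[ℂ] B))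

theorem moveN_is_star_algebra_isomorphism :
    -- `moveN` is the stated map on generators
    (∀ (r s : G) (n : N) (b : B),
      moveN (f := Finsupp.single (r, s, n) b) =
        Finsupp.single
          (⟨(r * s) * (n : G) * (r * s)⁻¹, hN.conj_mem _ n.2 _⟩,
            r * s * ((n : G))⁻¹ * s⁻¹, s * (n : G)) b) ∧
    -- it is a linear bijection
    Function.Bijective (moveN (G := G) (B := B) (N := N)) ∧
    (∀ f g : (G × G × N) →₀ B, moveN (f + g) = moveN f + moveN g) ∧
    (∀ (c : ℂ) (f : (G × G × N) →₀ B), moveN (c • f) = c • moveN f) ∧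
    -- it is multiplicative and *-preserving
    (∀ f g : (G × G × N) →₀ B, moveN (cMul α f g) = dMul α (moveN f) (moveN g)) ∧
    (∀ f : (G × G × N) →₀ B, moveN (cStar α f) = dStar α (moveN f)) :=
  ⟨fun r s n b => moveN_single (r, s, n) b, moveN_bijective, moveN_add, moveN_smul,
    moveN_cMul α, moveN_cStar α⟩
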